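/- arXiv:1804.02151 — 3 statements merged into one kernel-verified Lean document; each statement's English description precedes it below -/
import Mathlib

section
/- Consider the 1D wave equation y_tt - y_xx = 0 on (0,T)×(0,1) with boundary controls y(t,0)=u_0(t), y(t,1)=u_1(t) and initial data (y_0^0, 0) with y_0^0 a positive constant. For any T > 1 and positive constant target y_1^0, the controls u_0(t) = y_0^0 for t ∈ [0,1), u_0(t) = (y_1^0 - y_0^0)(t-1)/(T-1) + y_0^0 for t ∈ [1,T], and u_1(t) = (y_1^0 - y_0^0) t/(T-1) + y_0^0 for t ∈ [0,T-1), u_1(t) = y_1^0 for t ∈ [T-1,T], yield the solution y(t,x) = f(x+t) where f(ξ) = y_0^0 for ξ ∈ [0,1), f(ξ) = (y_1^0 - y_0^0)(ξ-1)/(T-1) + y_0^0 for ξ ∈ [1,T), f(ξ) = y_1^0 for ξ ∈ [T,T+1]; this solution satisfies the wave equation, the boundary conditions, initial conditions y(0,x)=y_0^0, y_t(0,x)=0, and final conditions y(T,x)=y_1^0, y_t(T,x)=0, and is nonnegative. -/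
/-!
The solution is a single wave `f` travelling to the left at unit speed, so it solves the wave
equation for any profile `f`. The profile is `y₀` on `ξ < 1` and `y₁` on `ξ ≥ T`, which gives the
initial and final states (with zero velocity, since `f` is locally constant there), and a ramp in
between; the controls are just the traces `f t` and `f (1 + t)`. Every value of `f` is a convex
combination of `y₀` and `y₁`, hence nonnegative.
-/

open Filter Topology

theorem deriv_deriv_comp_const_add_eq_deriv_deriv_comp_add_const (f : ℝ → ℝ) (t x : ℝ) :
    deriv (deriv fun s => f (x + s)) t = deriv (deriv fun z => f (z + t)) x := by
  have hs : deriv (fun s => f (x + s)) = fun s => deriv f (x + s) :=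
    funext (deriv_comp_const_add f x)
  have hz : deriv (fun z => f (z + t)) = fun z => deriv f (z + t) :=
    funext (deriv_comp_add_const f t)
  rw [hs, hz, deriv_comp_const_add, deriv_comp_add_const]

theorem sub_mul_div_add_nonneg {a b s L : ℝ} (ha : 0 ≤ a) (hb : 0 ≤ b) (hs : 0 ≤ s)
    (hsL : s ≤ L) : 0 ≤ (b - a) * s / L + a := by
  rcases hs.eq_or_lt with rfl | hs
  · simpa using ha
  have hL : 0 < L := hs.trans_le hsL
  have hconvex : (b - a) * s / L + a = (1 - s / L) * a + s / L * b := by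
    field_simp
    ring
  have hsL' : s / L ≤ 1 := (div_le_one hL).2 hsL
  rw [hconvex]
  exact add_nonneg (mul_nonneg (by linarith) ha) (mul_nonneg (div_nonneg hs.le hL.le) hb)

noncomputable def rampProfile (y₀ y₁ T ξ : ℝ) : ℝ :=
  if ξ < 1 then y₀ else if ξ < T then (y₁ - y₀) * (ξ - 1) / (T - 1) + y₀ else y₁

section rampProfile

variable {y₀ y₁ T ξ : ℝ}

theorem rampProfile_of_le_one (hT : 1 < T) (hξ : ξ ≤ 1) : rampProfile y₀ y₁ T ξ = y₀ := by
  rcases hξ.lt_or_eq with hξ | rfl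
  · simp [rampProfile, hξ]
  · simp [rampProfile, hT]

theorem rampProfile_of_le (hT : 1 ≤ T) (hξ : T ≤ ξ) : rampProfile y₀ y₁ T ξ = y₁ := by
  simp [rampProfile, (hT.trans hξ).not_gt, hξ.not_gt]

theorem rampProfile_eventuallyEq_of_lt_one (hξ : ξ < 1) :
    rampProfile y₀ y₁ T =ᶠ[𝓝 ξ] fun _ => y₀ := by
  filter_upwards [Iio_mem_nhds hξ] with η hη
  simp [rampProfile, Set.mem_Iio.1 hη]

theorem rampProfile_eventuallyEq_of_lt (hT : 1 ≤ T) (hξ : T < ξ) :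
    rampProfile y₀ y₁ T =ᶠ[𝓝 ξ] fun _ => y₁ := by
  filter_upwards [Ioi_mem_nhds hξ] with η hη
  exact rampProfile_of_le hT (Set.mem_Ioi.1 hη).le

theorem deriv_rampProfile_of_lt_one (hξ : ξ < 1) : deriv (rampProfile y₀ y₁ T) ξ = 0 := by
  rw [(rampProfile_eventuallyEq_of_lt_one hξ).deriv_eq, deriv_const]

theorem deriv_rampProfile_of_lt (hT : 1 ≤ T) (hξ : T < ξ) :
    deriv (rampProfile y₀ y₁ T) ξ = 0 := by
  rw [(rampProfile_eventuallyEq_of_lt hT hξ).deriv_eq, deriv_const]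

theorem rampProfile_eq_ite_of_le (hT : 1 < T) (hξ : ξ ≤ T) :
    rampProfile y₀ y₁ T ξ = if ξ < 1 then y₀ else (y₁ - y₀) * (ξ - 1) / (T - 1) + y₀ := by
  rcases hξ.lt_or_eq with hξ | rfl
  · simp [rampProfile, hξ]
  · simp [rampProfile, hT.not_gt, mul_div_cancel_right₀ _ (sub_ne_zero.2 hT.ne')]

theorem rampProfile_one_add (ht : 0 ≤ ξ) :
    rampProfile y₀ y₁ T (1 + ξ) = if ξ < T - 1 then (y₁ - y₀) * ξ / (T - 1) + y₀ else y₁ := by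
  simp [rampProfile, ht.not_gt, lt_sub_iff_add_lt']

theorem rampProfile_nonneg (h₀ : 0 ≤ y₀) (h₁ : 0 ≤ y₁) : 0 ≤ rampProfile y₀ y₁ T ξ := by
  unfold rampProfile
  split_ifs
  · exact h₀
  · exact sub_mul_div_add_nonneg h₀ h₁ (by linarith) (by linarith)
  · exact h₁

end rampProfile

/-- Constrained controllability of the 1D wave equation between positive constant steady
states in any time `T > 1`: the explicit traveling wave `y(t,x) = f(x+t)` with the explicit
nonnegative boundary controls `u₀, u₁` solves the wave equation, satisfies the boundary,
initial and final conditions, and stays nonnegative. -/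
theorem stmt1 (T y00 y10 : ℝ) (hT : 1 < T) (h0 : 0 < y00) (h1 : 0 < y10)
    (f : ℝ → ℝ)
    (hf : ∀ ξ : ℝ, f ξ =
      if ξ < 1 then y00 else if ξ < T then (y10 - y00) * (ξ - 1) / (T - 1) + y00 else y10)
    (u0 u1 : ℝ → ℝ)
    (hu0 : ∀ t : ℝ, u0 t = if t < 1 then y00 else (y10 - y00) * (t - 1) / (T - 1) + y00)
    (hu1 : ∀ t : ℝ, u1 t = if t < T - 1 then (y10 - y00) * t / (T - 1) + y00 else y10)
    (y : ℝ → ℝ → ℝ) (hy : ∀ t x : ℝ, y t x = f (x + t)) :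
    -- the wave equation `y_tt = y_xx` (traveling-wave sense)
    (∀ t x : ℝ, deriv (deriv (fun s : ℝ => y s x)) t = deriv (deriv (fun z : ℝ => y t z)) x) ∧
    -- boundary conditions
    (∀ t ∈ Set.Icc (0 : ℝ) T, y t 0 = u0 t ∧ y t 1 = u1 t) ∧
    -- nonnegativity of the controls
    (∀ t ∈ Set.Icc (0 : ℝ) T, 0 ≤ u0 t ∧ 0 ≤ u1 t) ∧
    -- initial conditions `(y(0,·), y_t(0,·)) = (y00, 0)`
    (∀ x ∈ Set.Icc (0 : ℝ) 1, y 0 x = y00) ∧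
    (∀ x ∈ Set.Ioo (0 : ℝ) 1, deriv (fun s : ℝ => y s x) 0 = 0) ∧
    -- final conditions `(y(T,·), y_t(T,·)) = (y10, 0)`
    (∀ x ∈ Set.Icc (0 : ℝ) 1, y T x = y10) ∧
    (∀ x ∈ Set.Ioo (0 : ℝ) 1, deriv (fun s : ℝ => y s x) T = 0) ∧
    -- nonnegativity of the state
    (∀ t ∈ Set.Icc (0 : ℝ) T, ∀ x ∈ Set.Icc (0 : ℝ) 1, 0 ≤ y t x) := by
  obtain rfl : f = rampProfile y00 y10 T := funext hf
  obtain rfl : y = fun t x => rampProfile y00 y10 T (x + t) := funext fun t => funext (hy t)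
  beta_reduce
  have hcontrol : ∀ t ∈ Set.Icc (0 : ℝ) T,
      u0 t = rampProfile y00 y10 T t ∧ u1 t = rampProfile y00 y10 T (1 + t) := fun t ht =>
    ⟨by rw [hu0, rampProfile_eq_ite_of_le hT ht.2], by rw [hu1, rampProfile_one_add ht.1]⟩
  refine ⟨fun t x => deriv_deriv_comp_const_add_eq_deriv_deriv_comp_add_const _ t x,
    fun t ht => ?_, fun t ht => ?_, fun x hx => ?_, fun x hx => ?_, fun x hx => ?_,
    fun x hx => ?_, fun t _ x _ => rampProfile_nonneg h0.le h1.le⟩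
  · rw [zero_add]
    exact ⟨(hcontrol t ht).1.symm, (hcontrol t ht).2.symm⟩
  · rw [(hcontrol t ht).1, (hcontrol t ht).2]
    exact ⟨rampProfile_nonneg h0.le h1.le, rampProfile_nonneg h0.le h1.le⟩
  · exact rampProfile_of_le_one hT (by simpa using hx.2)
  · rw [deriv_comp_const_add, add_zero, deriv_rampProfile_of_lt_one hx.2]
  · exact rampProfile_of_le hT.le (by linarith [hx.1])
  · rw [deriv_comp_const_add, deriv_rampProfile_of_lt hT.le (by linarith [hx.1])]
end

section
/- Let A generate a contractive C0-semigroup on a Hilbert space H and suppose the abstract control system y' = Ay + Bu (with admissible control operator B) is smoothly controllable in time T_0 with constant C: for every y_0 ∈ D(A^s) there is v ∈ L^∞((0,T_0);V) with y(T_0; y_0, v) = 0 and ||v||_{L^∞((0,T_0);V)} ≤ C||y_0||_{D(A^s)}. Then for every ε > 0 and η_0 ∈ D(A^s), choosing any integer N > C||η_0||_{D(A^s)}/ε, there exists a control v ∈ L^∞((0, N T_0); V) with ||v||_{L^∞;V} ≤ ε steering η_0 to 0 in time N T_0; i.e., the system is null-controllable by arbitrarily small controls in V, in sufficiently large time T̄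 = N T_0 depending on ε and ||η_0||_{D(A^s)}. -/
/-!
On the `k`-th interval `(k T₀, (k+1) T₀]` use the control that steers `T(k T₀)(η₀ / N)` to `0`
in time `T₀`. Since the semigroup is contractive and commutes with `A`, this datum has graph norm
at most `‖η₀‖_{D(A^s)} / N`, so every control has size at most `C ‖η₀‖_{D(A^s)} / N ≤ ε`. By the
cocycle property of mild solutions the state at time `k T₀` is `(1 - k / N) T(k T₀) η₀`, which
vanishes for `k = N`.
-/

open MeasureTheory Set

/-- The graph norm of `D(A^s)`. -/
noncomputable def graphNorm {𝕜 H : Type*} [NormedField 𝕜] [NormedAddCommGroup H] [NormedSpace 𝕜 H]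
    (A : H →ₗ[𝕜] H) (s : ℕ) (x : H) : ℝ :=
  √(∑ j ∈ Finset.range (s + 1), ‖(A ^ j) x‖ ^ 2)

section GraphNorm

variable {𝕜 H : Type*} [NormedField 𝕜] [NormedAddCommGroup H] [NormedSpace 𝕜 H]
  (A : H →ₗ[𝕜] H) (s : ℕ)

theorem graphNorm_smul (c : 𝕜) (x : H) : graphNorm A s (c • x) = ‖c‖ * graphNorm A s x := by
  simp only [graphNorm, map_smul, norm_smul, mul_pow, ← Finset.mul_sum]
  rw [Real.sqrt_mul (sq_nonneg _), Real.sqrt_sq (norm_nonneg _)]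

theorem graphNorm_map_le_of_commute {T : H →ₗ[𝕜] H} (hT : ∀ x, ‖T x‖ ≤ ‖x‖)
    (hcomm : Commute T A) (x : H) : graphNorm A s (T x) ≤ graphNorm A s x := by
  refine Real.sqrt_le_sqrt (Finset.sum_le_sum fun j _ => ?_)
  rw [← Module.End.mul_apply, ← (hcomm.pow_right j).eq, Module.End.mul_apply]
  exact pow_le_pow_left₀ (norm_nonneg _) (hT _) 2

end GraphNorm

/-- The controls `w k` used one after the other, `w k` on `(k T₀, (k+1) T₀]`. -/
noncomputable def concatControls {α : Type*} (T₀ : ℝ) (w : ℕ → ℝ → α) (t : ℝ) : α :=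
  w (⌈t / T₀⌉₊ - 1) (t - ((⌈t / T₀⌉₊ - 1 : ℕ) : ℝ) * T₀)

theorem concatControls_add_mul {α : Type*} {T₀ : ℝ} (hT₀ : 0 < T₀) (w : ℕ → ℝ → α) (k : ℕ)
    {ρ : ℝ} (hρ : ρ ∈ Ioc 0 T₀) : concatControls T₀ w (ρ + k * T₀) = w k ρ := by
  have hceil : ⌈(ρ + k * T₀) / T₀⌉₊ = k + 1 := by
    rw [Nat.ceil_eq_iff k.succ_ne_zero, add_div, mul_div_cancel_right₀ _ hT₀.ne']
    push_cast
    constructor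
    · linarith [div_pos hρ.1 hT₀]
    · linarith [(div_le_one hT₀).2 hρ.2]
  simp only [concatControls, hceil, Nat.add_sub_cancel, add_sub_cancel_right]

section MildSolution

variable {H : Type*} [NormedAddCommGroup H] [NormedSpace ℝ H] (Tsg : ℝ → H →L[ℝ] H)

/-- The mild solution at time `T` of `y' = A y + f`, `y(0) = y₀`, where `Tsg` is the
semigroup generated by `A`. -/
noncomputable def mildSolution (y₀ : H) (f : ℝ → H) (T : ℝ) : H :=
  Tsg T y₀ + ∫ r in (0 : ℝ)..T, Tsg (T - r) (f r)

variable {Tsg}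

theorem mildSolution_eq_of_eq_zero {T : ℝ} {y z : H} {f : ℝ → H}
    (hz : mildSolution Tsg z f T = 0) : mildSolution Tsg y f T = Tsg T (y - z) := by
  rw [mildSolution, eq_neg_of_add_eq_zero_right hz, map_sub, sub_eq_add_neg]

theorem mildSolution_congr {T : ℝ} (hT : 0 ≤ T) (y₀ : H) {f g : ℝ → H} (hfg : EqOn f g (Ioc 0 T)) :
    mildSolution Tsg y₀ f T = mildSolution Tsg y₀ g T := by
  simp only [mildSolution]
  congr 1
  refine intervalIntegral.integral_congr_ae (Filter.Eventually.of_forall fun r hr => ?_)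
  rw [uIoc_of_le hT] at hr
  rw [hfg hr]

theorem intervalIntegrable_duhamel_congr {T : ℝ} (hT : 0 ≤ T) {f g : ℝ → H}
    (hfg : EqOn f g (Ioc 0 T)) (hf : IntervalIntegrable (fun r => Tsg (T - r) (f r)) volume 0 T) :
    IntervalIntegrable (fun r => Tsg (T - r) (g r)) volume 0 T :=
  hf.congr fun r hr => by
    rw [uIoc_of_le hT] at hr
    simp only [hfg hr]

variable {T₁ T₂ : ℝ} {f : ℝ → H}

theorem semigroup_add_sub_eqOn
    (hTadd : ∀ s t : ℝ, 0 ≤ s → 0 ≤ t → Tsg (s + t) = (Tsg s).comp (Tsg t)) (hT₂ : 0 ≤ T₂) :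
    EqOn (fun r => Tsg (T₁ + T₂ - r) (f r)) (fun r => Tsg T₂ (Tsg (T₁ - r) (f r))) (Icc 0 T₁) := by
  intro r hr
  simp only
  rw [show T₁ + T₂ - r = T₂ + (T₁ - r) by ring, hTadd _ _ hT₂ (sub_nonneg.2 hr.2)]
  rfl

theorem intervalIntegrable_duhamel_add
    (hTadd : ∀ s t : ℝ, 0 ≤ s → 0 ≤ t → Tsg (s + t) = (Tsg s).comp (Tsg t))
    (hT₁ : 0 ≤ T₁) (hT₂ : 0 ≤ T₂)
    (hf₁ : IntervalIntegrable (fun r => Tsg (T₁ - r) (f r)) volume 0 T₁)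
    (hf₂ : IntervalIntegrable (fun r => Tsg (T₂ - r) (f (r + T₁))) volume 0 T₂) :
    IntervalIntegrable (fun r => Tsg (T₁ + T₂ - r) (f r)) volume 0 (T₁ + T₂) := by
  have h₁ : IntervalIntegrable (fun r => Tsg T₂ (Tsg (T₁ - r) (f r))) volume 0 T₁ :=
    ⟨(Tsg T₂).integrable_comp hf₁.1, (Tsg T₂).integrable_comp hf₁.2⟩
  have h₂ : IntervalIntegrable (fun r => Tsg (T₁ + T₂ - r) (f r)) volume T₁ (T₁ + T₂) := by
    have := hf₂.comp_sub_right T₁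
    simp only [sub_add_cancel, zero_add, show ∀ r, T₂ - (r - T₁) = T₁ + T₂ - r by intros; ring,
      add_comm T₂] at this
    exact this
  refine (h₁.congr ?_).trans h₂
  exact (semigroup_add_sub_eqOn hTadd hT₂).symm.mono (uIoc_of_le hT₁ ▸ Ioc_subset_Icc_self)

theorem mildSolution_add [CompleteSpace H]
    (hTadd : ∀ s t : ℝ, 0 ≤ s → 0 ≤ t → Tsg (s + t) = (Tsg s).comp (Tsg t))
    (hT₁ : 0 ≤ T₁) (hT₂ : 0 ≤ T₂) (y₀ : H)
    (hf₁ : IntervalIntegrable (fun r => Tsg (T₁ - r) (f r)) volume 0 T₁)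
    (hf₂ : IntervalIntegrable (fun r => Tsg (T₂ - r) (f (r + T₁))) volume 0 T₂) :
    mildSolution Tsg y₀ f (T₁ + T₂) =
      mildSolution Tsg (mildSolution Tsg y₀ f T₁) (fun r => f (r + T₁)) T₂ := by
  have hint := intervalIntegrable_duhamel_add hTadd hT₁ hT₂ hf₁ hf₂
  have hfirst : ∫ r in (0 : ℝ)..T₁, Tsg (T₁ + T₂ - r) (f r) =
      Tsg T₂ (∫ r in (0 : ℝ)..T₁, Tsg (T₁ - r) (f r)) := by
    rw [intervalIntegral.integral_congr ((uIcc_of_le hT₁).symm ▸ semigroup_add_sub_eqOn hTadd hT₂),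
      (Tsg T₂).intervalIntegral_comp_comm hf₁]
  have hsecond : ∫ r in T₁..(T₁ + T₂), Tsg (T₁ + T₂ - r) (f r) =
      ∫ r in (0 : ℝ)..T₂, Tsg (T₂ - r) (f (r + T₁)) := by
    have := intervalIntegral.integral_comp_add_right (a := 0) (b := T₂)
      (fun r => Tsg (T₁ + T₂ - r) (f r)) T₁
    rw [zero_add, add_comm T₂] at this
    rw [← this]
    congr with r
    ring_nf
  simp only [mildSolution]
  rw [← intervalIntegral.integral_add_adjacent_intervals (hint.mono_set ?_) (hint.mono_set ?_),
    hfirst, hsecond, add_comm T₁, hTadd _ _ hT₂ hT₁, map_add]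
  · simp only [ContinuousLinearMap.comp_apply]
    abel
  · exact uIcc_subset_uIcc_left (mem_uIcc_of_le hT₁ (le_add_of_nonneg_right hT₂))
  · exact uIcc_subset_uIcc_right (mem_uIcc_of_le hT₁ (le_add_of_nonneg_right hT₂))

theorem mildSolution_concatControls [CompleteSpace H]
    (hTadd : ∀ s t : ℝ, 0 ≤ s → 0 ≤ t → Tsg (s + t) = (Tsg s).comp (Tsg t))
    {T₀ : ℝ} (hT₀ : 0 < T₀) (c : ℝ) (y₀ : H) {g : ℕ → ℝ → H}
    (hint : ∀ k, IntervalIntegrable (fun r => Tsg (T₀ - r) (g k r)) volume 0 T₀)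
    (hsteer : ∀ k : ℕ, mildSolution Tsg (Tsg (k * T₀) (c • y₀)) (g k) T₀ = 0) (k : ℕ) :
    IntervalIntegrable (fun r => Tsg (k * T₀ - r) (concatControls T₀ g r)) volume 0 (k * T₀) ∧
      mildSolution Tsg y₀ (concatControls T₀ g) (k * T₀) = (1 - k * c) • Tsg (k * T₀) y₀ := by
  induction k with
  | zero => simp [mildSolution]
  | succ k ih =>
    have hkT₀ : 0 ≤ (k : ℝ) * T₀ := by positivity
    have hshift : EqOn (fun r => concatControls T₀ g (r + k * T₀)) (g k) (Ioc 0 T₀) :=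
      fun r hr => concatControls_add_mul hT₀ g k hr
    have hint_shift := intervalIntegrable_duhamel_congr hT₀.le hshift.symm (hint k)
    rw [Nat.cast_succ, add_one_mul]
    refine ⟨intervalIntegrable_duhamel_add hTadd hkT₀ hT₀.le ih.1 hint_shift, ?_⟩
    rw [mildSolution_add hTadd hkT₀ hT₀.le y₀ ih.1 hint_shift, mildSolution_congr hT₀.le _ hshift,
      mildSolution_eq_of_eq_zero (hsteer k), ih.2, map_smul, ← sub_smul, map_smul, add_comm (_ * T₀),
      hTadd _ _ hT₀.le hkT₀, ContinuousLinearMap.comp_apply]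
    congr 1
    ring

end MildSolution

theorem stmt8_general {H U V : Type*}
    [NormedAddCommGroup H] [InnerProductSpace ℝ H] [CompleteSpace H]
    [NormedAddCommGroup U] [NormedSpace ℝ U]
    [NormedAddCommGroup V] [NormedSpace ℝ V]
    (Tsg : ℝ → H →L[ℝ] H) (A : H →ₗ[ℝ] H) (B : U →L[ℝ] H) (e : V →L[ℝ] U)
    (hTadd : ∀ s t : ℝ, 0 ≤ s → 0 ≤ t → Tsg (s + t) = (Tsg s).comp (Tsg t))
    (hcontr : ∀ t : ℝ, 0 ≤ t → ‖Tsg t‖ ≤ 1)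
    (hcomm : ∀ t : ℝ, 0 ≤ t → ∀ x : H, Tsg t (A x) = A (Tsg t x))
    (s : ℕ) (T0 : ℝ) (hT0pos : 0 < T0) (C : ℝ) (hC : 0 < C)
    -- smooth controllability in time `T₀` with constant `C`
    (hsc : ∀ y0 : H, ∃ v : ℝ → V,
      IntervalIntegrable (fun r => Tsg (T0 - r) (B (e (v r)))) volume 0 T0 ∧
      Tsg T0 y0 + ∫ r in (0 : ℝ)..T0, Tsg (T0 - r) (B (e (v r))) = 0 ∧
      ∀ t : ℝ, ‖v t‖ ≤ C * Real.sqrt (∑ j ∈ Finset.range (s + 1), ‖(A ^ j) y0‖ ^ 2)) :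
    ∀ ε : ℝ, 0 < ε → ∀ η0 : H, ∀ N : ℕ,
      C * Real.sqrt (∑ j ∈ Finset.range (s + 1), ‖(A ^ j) η0‖ ^ 2) / ε < N →
      ∃ v : ℝ → V, (∀ t : ℝ, ‖v t‖ ≤ ε) ∧
        IntervalIntegrable (fun r => Tsg ((N : ℝ) * T0 - r) (B (e (v r)))) volume 0 ((N : ℝ) * T0) ∧
        Tsg ((N : ℝ) * T0) η0 +
          ∫ r in (0 : ℝ)..((N : ℝ) * T0), Tsg ((N : ℝ) * T0 - r) (B (e (v r))) = 0 := by
  intro ε hε η0 N hN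
  have hN₀ : (0 : ℝ) < N := lt_of_le_of_lt (by positivity) hN
  choose w hw_int hw_null hw_bound using hsc
  set z : ℕ → H := fun k => Tsg (k * T0) ((N : ℝ)⁻¹ • η0)
  have hz_small : ∀ k, C * graphNorm A s (z k) ≤ ε := fun k => calc
    C * graphNorm A s (z k) ≤ C * graphNorm A s ((N : ℝ)⁻¹ • η0) := by
      have hk : 0 ≤ (k : ℝ) * T0 := by positivity
      refine mul_le_mul_of_nonneg_left (graphNorm_map_le_of_commute A s ?_ ?_ _) hC.le
      · exact fun x => ((Tsg _).le_of_opNorm_le (hcontr _ hk) x).trans_eq (one_mul _)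
      · exact LinearMap.ext (hcomm _ hk)
    _ = C * graphNorm A s η0 / N := by
      rw [graphNorm_smul, norm_inv, RCLike.norm_natCast]
      ring
    _ ≤ ε := by
      rw [div_lt_iff₀ hε] at hN
      rw [div_le_iff₀ hN₀, mul_comm ε]
      exact hN.le
  obtain ⟨hint, hstate⟩ := mildSolution_concatControls hTadd hT0pos (N : ℝ)⁻¹ η0
    (g := fun k r => B (e (w (z k) r))) (fun k => hw_int (z k)) (fun k => hw_null (z k)) N
  rw [mul_inv_cancel₀ hN₀.ne', sub_self, zero_smul] at hstate
  exact ⟨concatControls T0 (fun k => w (z k)), fun t => (hw_bound _ _).trans (hz_small _), hint, hstate⟩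

/-- Null controllability by arbitrarily small smooth controls: if the system
`y' = Ay + B(e v)` is smoothly controllable in time `T₀` with constant `C` (from data in
`D(A^s)` with the graph norm), and the semigroup is contractive and commutes with `A`,
then for every `ε > 0`, every `η₀`, and every integer `N > C‖η₀‖_{D(A^s)}/ε`, there is a
control of size at most `ε` in `V` steering `η₀` to `0` in time `N T₀`. -/
theorem stmt8 {H U V : Type*}
    [NormedAddCommGroup H] [InnerProductSpace ℝ H] [CompleteSpace H]
    [NormedAddCommGroup U] [NormedSpace ℝ U]
    [NormedAddCommGroup V] [NormedSpace ℝ V]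
    (Tsg : ℝ → H →L[ℝ] H) (A : H →ₗ[ℝ] H) (B : U →L[ℝ] H) (e : V →L[ℝ] U)
    (hT0 : Tsg 0 = 1)
    (hTadd : ∀ s t : ℝ, 0 ≤ s → 0 ≤ t → Tsg (s + t) = (Tsg s).comp (Tsg t))
    (hcontr : ∀ t : ℝ, 0 ≤ t → ‖Tsg t‖ ≤ 1)
    (hcomm : ∀ t : ℝ, 0 ≤ t → ∀ x : H, Tsg t (A x) = A (Tsg t x))
    (s : ℕ) (T0 : ℝ) (hT0pos : 0 < T0) (C : ℝ) (hC : 0 < C)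
    -- smooth controllability in time `T₀` with constant `C`
    (hsc : ∀ y0 : H, ∃ v : ℝ → V,
      IntervalIntegrable (fun r => Tsg (T0 - r) (B (e (v r)))) volume 0 T0 ∧
      Tsg T0 y0 + ∫ r in (0 : ℝ)..T0, Tsg (T0 - r) (B (e (v r))) = 0 ∧
      ∀ t : ℝ, ‖v t‖ ≤ C * Real.sqrt (∑ j ∈ Finset.range (s + 1), ‖(A ^ j) y0‖ ^ 2)) :
    ∀ ε : ℝ, 0 < ε → ∀ η0 : H, ∀ N : ℕ,
      C * Real.sqrt (∑ j ∈ Finset.range (s + 1), ‖(A ^ j) η0‖ ^ 2) / ε < N →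
      ∃ v : ℝ → V, (∀ t : ℝ, ‖v t‖ ≤ ε) ∧
        IntervalIntegrable (fun r => Tsg ((N : ℝ) * T0 - r) (B (e (v r)))) volume 0 ((N : ℝ) * T0) ∧
        Tsg ((N : ℝ) * T0) η0 +
          ∫ r in (0 : ℝ)..((N : ℝ) * T0), Tsg ((N : ℝ) * T0 - r) (B (e (v r))) = 0 :=
  stmt8_general Tsg A B e hTadd hcontr hcomm s T0 hT0pos C hC hsc
end

section
/- For every λ ∈ [0,1], the constant boundary controls û^0_λ = (1−λ) y_0^0 + λ y_1^0 at x = 0 and û^1_λ = (1−λ) y_1^0 + λ y_0^0 at x = 1 drive the 1D wave equation on (0,1) from the constant state (y_0^0, 0) to (y_1^0, 0) in time T = 1; in particular constrained minimal-time controls are not unique. -/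
lemma deriv_eventually_const {h : ℝ → ℝ} {a c : ℝ}
    (H : ∀ᶠ t in nhds a, h t = c) : deriv h a = 0 := by
  have : deriv h a = deriv (fun _ : ℝ => c) a := Filter.EventuallyEq.deriv_eq H
  simp [this]

/-- Nonuniqueness of the minimal-time constrained controls: for every `λ ∈ [0,1]`, the
constant boundary controls `û⁰_λ = (1−λ)y₀⁰ + λy₁⁰` at `x = 0` and
`û¹_λ = (1−λ)y₁⁰ + λy₀⁰` at `x = 1` drive the 1D wave equation from `(y₀⁰,0)` to
`(y₁⁰,0)` in time `T = 1`, via the d'Alembert solution `y(t,x) = f(x+t) + g(x−t)`;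
distinct values of `λ` give distinct controls. -/
theorem stmt17 (y00 y10 : ℝ) (h0 : 0 < y00) (h1 : 0 < y10) :
    (∀ lam ∈ Set.Icc (0 : ℝ) 1, ∀ f g : ℝ → ℝ, ∀ y : ℝ → ℝ → ℝ,
      (∀ ξ : ℝ, f ξ = if ξ ≤ 1 then y00 / 2 else ((1 - lam) * y10 + lam * y00) - y00 / 2) →
      (∀ ξ : ℝ, g ξ = if 0 ≤ ξ then y00 / 2 else ((1 - lam) * y00 + lam * y10) - y00 / 2) →
      (∀ t x : ℝ, y t x = f (x + t) + g (x - t)) →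
      -- boundary controls are the constants `û⁰_λ` and `û¹_λ`
      (∀ t ∈ Set.Ioo (0 : ℝ) 1,
        y t 0 = (1 - lam) * y00 + lam * y10 ∧ y t 1 = (1 - lam) * y10 + lam * y00) ∧
      -- initial datum `(y₀⁰, 0)`
      (∀ x ∈ Set.Ioo (0 : ℝ) 1, y 0 x = y00 ∧ deriv (fun t : ℝ => y t x) 0 = 0) ∧
      -- final datum `(y₁⁰, 0)` at time `T = 1`
      (∀ x ∈ Set.Ioo (0 : ℝ) 1, y 1 x = y10 ∧ deriv (fun t : ℝ => y t x) 1 = 0)) ∧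
    -- nonuniqueness: different `λ` give different controls
    (∀ lam mu : ℝ, lam ≠ mu → y00 ≠ y10 →
      (1 - lam) * y00 + lam * y10 ≠ (1 - mu) * y00 + mu * y10) := by
  constructor
  · intro lam hlam f g y hf hg hy
    refine ⟨?_, ?_, ?_⟩
    · intro t ht
      obtain ⟨ht0, ht1⟩ := ht
      constructor
      · rw [hy, hf, hg]
        rw [if_pos (by linarith), if_neg (by linarith)]
        ring
      · rw [hy, hf, hg]
        rw [if_neg (by linarith), if_pos (by linarith)]
        ring
    · intro x hx
      obtain ⟨hx0, hx1⟩ := hx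
      have hev : ∀ᶠ t in nhds (0 : ℝ), y t x = y00 := by
        have hmem : Set.Ioo (-1) (min x (1 - x)) ∈ nhds (0 : ℝ) :=
          Ioo_mem_nhds (by linarith) (by simp [hx0]; linarith)
        filter_upwards [hmem] with t ht
        obtain ⟨ha, hb⟩ := ht
        have hb1 := lt_of_lt_of_le hb (min_le_left _ _)
        have hb2 := lt_of_lt_of_le hb (min_le_right _ _)
        rw [hy, hf, hg, if_pos (by linarith), if_pos (by linarith)]
        ring
      refine ⟨?_, deriv_eventually_const hev⟩
      have := hev.self_of_nhds
      simpa using this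
    · intro x hx
      obtain ⟨hx0, hx1⟩ := hx
      have hev : ∀ᶠ t in nhds (1 : ℝ), y t x = y10 := by
        have hmem : Set.Ioo (max x (1 - x)) 2 ∈ nhds (1 : ℝ) :=
          Ioo_mem_nhds (by simp; constructor <;> linarith) (by linarith)
        filter_upwards [hmem] with t ht
        obtain ⟨ha, hb⟩ := ht
        have ha1 := lt_of_le_of_lt (le_max_left x (1-x)) ha
        have ha2 := lt_of_le_of_lt (le_max_right x (1-x)) ha
        rw [hy, hf, hg, if_neg (by linarith), if_neg (by linarith)]
        ring
      refine ⟨?_, deriv_eventually_const hev⟩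
      have := hev.self_of_nhds
      simpa using this
  · intro lam mu hlm hne
    intro h
    apply hlm
    have : (lam - mu) * (y10 - y00) = 0 := by linarith [h]
    rcases mul_eq_zero.mp this with h' | h'
    · linarith
    · exact absurd (by linarith : y00 = y10) hne
end
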